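/- arXiv:2009.06718 — 2 statements merged into one kernel-verified Lean document; each statement's English description precedes it below -/
import Mathlib

section
/- Let K be a field and g₂, g₃, t, d ∈ K with d² = 4t³ − g₂·t − g₃. Then the determinant of the 3×3 matrix with rows (2x+tz, y+dz, (3t²−g₂)z), (0, x−tz, y−dz), (z, 0, −2x−tz) equals y²z − 4x³ + g₂xz² + g₃z³ as a polynomial in x, y, z. -/
open MvPolynomial

set_option maxHeartbeats 1000000 in
theorem stmt_0 {K : Type*} [Field K] (g₂ g₃ t d : K)
    (hd : d ^ 2 = 4 * t ^ 3 - g₂ * t - g₃) :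
    let x : MvPolynomial (Fin 3) K := X 0
    let y : MvPolynomial (Fin 3) K := X 1
    let z : MvPolynomial (Fin 3) K := X 2
    Matrix.det !![2 * x + C t * z, y + C d * z, C (3 * t ^ 2 - g₂) * z;
                  0, x - C t * z, y - C d * z;
                  z, 0, -(2 * x) - C t * z] =
      y ^ 2 * z - 4 * x ^ 3 + C g₂ * x * z ^ 2 + C g₃ * z ^ 3 := by
  intro x y z
  have h : (C d : MvPolynomial (Fin 3) K) ^ 2 =
      4 * C t ^ 3 - C g₂ * C t - C g₃ := by
    rw [← map_pow, hd]; push_cast [map_sub, map_mul, map_pow, map_ofNat]; ring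
  simp only [Matrix.det_fin_three, Matrix.of_apply, Matrix.cons_val', Matrix.cons_val_zero,
    Matrix.empty_val', Matrix.cons_val_fin_one, Matrix.cons_val_one, Matrix.head_cons,
    Matrix.head_fin_const, Matrix.cons_val_two, Matrix.tail_cons, map_sub, map_mul,
    map_pow, map_ofNat]
  linear_combination (-(z:MvPolynomial (Fin 3) K) ^ 3) * h
end

section
/- Let a, b, c, π₀, ω be nonzero complex numbers with a⁴ + c⁴ = b⁴. Then the determinant of the 3×3 matrix with rows (2x − (π₀²/(3ω²))(a⁴+b⁴)z, y, −(π₀/ω)⁴c⁸z), (0, x + (π₀²/(3ω²))(a⁴+b⁴)z, y), (z, 0, −2x + (π₀²/(3ω²))(a⁴+b⁴)z) equals y²z − 4x³ + g₂xz² + g₃z³, where g₂ = (2/3)(π₀/ω)⁴(a⁸+b⁸+c⁸) and g₃ = (4/27)(π₀/ω)⁶(a⁴+b⁴)(b⁴+c⁴)(c⁴−a⁴). -/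
open MvPolynomial

set_option maxHeartbeats 1000000 in
theorem stmt_4 (a b c π₀ ω : ℂ) (ha : a ≠ 0) (hb : b ≠ 0) (hc : c ≠ 0)
    (hπ : π₀ ≠ 0) (hω : ω ≠ 0) (hJ : a ^ 4 + c ^ 4 = b ^ 4)
    (g₂ g₃ : ℂ)
    (hg₂ : g₂ = (2 / 3) * (π₀ / ω) ^ 4 * (a ^ 8 + b ^ 8 + c ^ 8))
    (hg₃ : g₃ = (4 / 27) * (π₀ / ω) ^ 6 * (a ^ 4 + b ^ 4) * (b ^ 4 + c ^ 4) * (c ^ 4 - a ^ 4)) :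
    let x : MvPolynomial (Fin 3) ℂ := X 0
    let y : MvPolynomial (Fin 3) ℂ := X 1
    let z : MvPolynomial (Fin 3) ℂ := X 2
    Matrix.det !![2 * x - C (π₀ ^ 2 / (3 * ω ^ 2) * (a ^ 4 + b ^ 4)) * z, y,
                    -C ((π₀ / ω) ^ 4 * c ^ 8) * z;
                  0, x + C (π₀ ^ 2 / (3 * ω ^ 2) * (a ^ 4 + b ^ 4)) * z, y;
                  z, 0, -(2 * x) + C (π₀ ^ 2 / (3 * ω ^ 2) * (a ^ 4 + b ^ 4)) * z] =
      y ^ 2 * z - 4 * x ^ 3 + C g₂ * x * z ^ 2 + C g₃ * z ^ 3 := by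
  intro x y z
  have hb4 : b ^ 4 = a ^ 4 + c ^ 4 := hJ.symm
  have h2 : g₂ = 3 * (π₀ ^ 2 / (3 * ω ^ 2) * (a ^ 4 + b ^ 4)) ^ 2 + (π₀ / ω) ^ 4 * c ^ 8 := by
    subst hg₂
    rw [show b ^ 8 = (a ^ 4 + c ^ 4) ^ 2 by rw [← hb4]; ring, hb4]
    field_simp
    ring
  have h3 : g₃ = (π₀ ^ 2 / (3 * ω ^ 2) * (a ^ 4 + b ^ 4)) * ((π₀ / ω) ^ 4 * c ^ 8)
      - (π₀ ^ 2 / (3 * ω ^ 2) * (a ^ 4 + b ^ 4)) ^ 3 := by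
    subst hg₃; rw [hb4]; ring
  rw [h2, h3]
  simp [Matrix.det_fin_three, map_ofNat]
  ring
end
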